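/- arXiv:1502.00398 — 2 statements merged into one kernel-verified Lean document; each statement's English description precedes it below -/
import Mathlib

section
/- For all real numbers ξ and η, and for any choice of signs ε₁, ε₂ ∈ {+1,-1}, one has |⟨ξ+η⟩ + ε₁⟨ξ⟩ + ε₂⟨η⟩| ≥ (⟨ξ+η⟩ + ⟨ξ⟩ + ⟨η⟩)⁻¹, where ⟨ξ⟩ := √(1+ξ²). In particular this quantity is never zero. -/
/-!
Write `a = ⟨ξ+η⟩`, `b = ⟨ξ⟩`, `c = ⟨η⟩` and `s = a + b + c`. For every choice of signs other than
`(+,+)` (where the phase is `s ≥ 3`), the phase times `s` is, up to sign, a difference of squares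
`(⟨x⟩ + ⟨y⟩)² - ⟨x+y⟩²` with `{x, y, x+y} = {±ξ, ±η, ±(ξ+η)}`. This equals
`1 + 2(⟨x⟩⟨y⟩ - xy)`, which is at least `1` by Cauchy–Schwarz for `(1, x)` and `(1, y)`.
-/

/-- The Japanese bracket `⟨ξ⟩ = √(1+ξ²)`. -/
noncomputable def jb (ξ : ℝ) : ℝ := Real.sqrt (1 + ξ ^ 2)

lemma jb_sq (x : ℝ) : jb x ^ 2 = 1 + x ^ 2 :=
  Real.sq_sqrt (by positivity)

lemma one_le_jb (x : ℝ) : 1 ≤ jb x :=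
  Real.one_le_sqrt.mpr (by nlinarith [sq_nonneg x])

lemma jb_neg (x : ℝ) : jb (-x) = jb x := by
  simp only [jb, neg_sq]

lemma mul_le_jb_mul_jb (x y : ℝ) : x * y ≤ jb x * jb y := by
  rw [jb, jb, ← Real.sqrt_mul (by positivity)]
  exact Real.le_sqrt_of_sq_le (by nlinarith [sq_nonneg x, sq_nonneg y])

lemma one_le_sq_jb_add_jb_sub_sq_jb_add (x y : ℝ) :
    1 ≤ (jb x + jb y) ^ 2 - jb (x + y) ^ 2 := by
  have h := mul_le_jb_mul_jb x y
  have expand : (jb x + jb y) ^ 2 - jb (x + y) ^ 2 = 1 + 2 * (jb x * jb y - x * y) := by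
    rw [add_sq, jb_sq, jb_sq, jb_sq]
    ring
  rw [expand]
  linarith

lemma one_le_abs_phase_mul_sum (ξ η ε₁ ε₂ : ℝ) (h₁ : ε₁ = 1 ∨ ε₁ = -1) (h₂ : ε₂ = 1 ∨ ε₂ = -1) :
    1 ≤ |jb (ξ + η) + ε₁ * jb ξ + ε₂ * jb η| * (jb (ξ + η) + jb ξ + jb η) := by
  have ha := one_le_jb (ξ + η)
  have hb := one_le_jb ξ
  have hc := one_le_jb η
  have hs : 0 ≤ jb (ξ + η) + jb ξ + jb η := by linarith
  rcases h₁ with rfl | rfl <;> rcases h₂ with rfl | rfl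
  · rw [abs_of_pos (by linarith)]
    nlinarith
  · have h := one_le_sq_jb_add_jb_sub_sq_jb_add (ξ + η) (-ξ)
    rw [jb_neg, add_neg_cancel_comm] at h
    exact h.trans (le_of_eq_of_le (by ring) (mul_le_mul_of_nonneg_right (le_abs_self _) hs))
  · have h := one_le_sq_jb_add_jb_sub_sq_jb_add (ξ + η) (-η)
    rw [jb_neg, add_neg_cancel_right] at h
    exact h.trans (le_of_eq_of_le (by ring) (mul_le_mul_of_nonneg_right (le_abs_self _) hs))
  · have h := one_le_sq_jb_add_jb_sub_sq_jb_add ξ η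
    exact h.trans (le_of_eq_of_le (by ring) (mul_le_mul_of_nonneg_right (neg_le_abs _) hs))

/-- Nondegeneracy of the Klein–Gordon resonance phases: for any signs
`ε₁, ε₂ ∈ {1, -1}`, `|⟨ξ+η⟩ + ε₁⟨ξ⟩ + ε₂⟨η⟩| ≥ (⟨ξ+η⟩ + ⟨ξ⟩ + ⟨η⟩)⁻¹`;
in particular the phase never vanishes. -/
theorem stmt_0 (ξ η ε₁ ε₂ : ℝ) (h₁ : ε₁ = 1 ∨ ε₁ = -1) (h₂ : ε₂ = 1 ∨ ε₂ = -1) :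
    (jb (ξ + η) + jb ξ + jb η)⁻¹ ≤ |jb (ξ + η) + ε₁ * jb ξ + ε₂ * jb η| ∧
    jb (ξ + η) + ε₁ * jb ξ + ε₂ * jb η ≠ 0 := by
  have key := one_le_abs_phase_mul_sum ξ η ε₁ ε₂ h₁ h₂
  have hs : 0 < jb (ξ + η) + jb ξ + jb η := by
    linarith [one_le_jb (ξ + η), one_le_jb ξ, one_le_jb η]
  refine ⟨(inv_le_iff_one_le_mul₀ hs).mpr key, fun h => ?_⟩
  rw [h, abs_zero, zero_mul] at key
  norm_num at key
end

section
/- Let ⟨ξ⟩ := √(1+ξ²) and define c*(ξ) := ξ²[2⟨ξ⟩ - ((2⟨ξ⟩+⟨2ξ⟩)(⟨ξ⟩⟨2ξ⟩+ξ²+⟨ξ⟩²)²)/(6⟨ξ⟩⟨2ξ⟩) + (⟨ξ⟩⟨2ξ⟩-⟨ξ⟩²-ξ²)²/(2(2⟨ξ⟩+⟨2ξ⟩)⟨ξ⟩⟨2ξ⟩)]. Then c*(0) = 0, (d/dξ)c*(0) = 0, and there is a constant C such that |c*(ξ)| ≤ C ξ² ⟨ξ⟩³ for all ξ ∈ ℝ.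 -/
/-- The resonant coefficient `c*(ξ)` of the cubic interaction at the space-time
resonance `(ξ,η,σ) = (ξ,0,-ξ)`. -/
noncomputable def cstar (ξ : ℝ) : ℝ :=
  ξ ^ 2 * (2 * jb ξ
    - ((2 * jb ξ + jb (2 * ξ)) * (jb ξ * jb (2 * ξ) + ξ ^ 2 + jb ξ ^ 2) ^ 2)
        / (6 * jb ξ * jb (2 * ξ))
    + (jb ξ * jb (2 * ξ) - jb ξ ^ 2 - ξ ^ 2) ^ 2
        / (2 * (2 * jb ξ + jb (2 * ξ)) * jb ξ * jb (2 * ξ)))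

/-!
`c*` carries an explicit factor `ξ²`, and the remaining bracket is bounded by a multiple of
`⟨ξ⟩³` because `⟨ξ⟩ ≤ ⟨2ξ⟩ ≤ 2⟨ξ⟩` and `|ξ| ≤ ⟨ξ⟩`. The bound `|c*(ξ)| ≤ C ξ² ⟨ξ⟩³` then
says `c* = O(ξ²)` near `0`, which already forces `(c*)'(0) = 0`.
-/

open Topology Asymptotics

theorem hasDerivAt_zero_of_isBigO_sq {𝕜 F : Type*} [NontriviallyNormedField 𝕜]
    [NormedAddCommGroup F] [NormedSpace 𝕜 F] {f : 𝕜 → F} (h₀ : f 0 = 0)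
    (hf : f =O[𝓝 0] fun x => x ^ 2) : HasDerivAt f 0 0 := by
  rw [hasDerivAt_iff_isLittleO_nhds_zero]
  simpa [h₀] using hf.trans_isLittleO (isLittleO_pow_id one_lt_two)

namespace jb

theorem sq_eq (ξ : ℝ) : jb ξ ^ 2 = 1 + ξ ^ 2 := Real.sq_sqrt (by positivity)

theorem one_le (ξ : ℝ) : 1 ≤ jb ξ :=
  Real.one_le_sqrt.mpr (by nlinarith [sq_nonneg ξ])

theorem continuous : Continuous jb := by
  unfold jb
  fun_prop

theorem le_two_mul (ξ : ℝ) : jb ξ ≤ jb (2 * ξ) :=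
  Real.sqrt_le_sqrt (by nlinarith [sq_nonneg ξ])

theorem two_mul_le (ξ : ℝ) : jb (2 * ξ) ≤ 2 * jb ξ := by
  nlinarith [sq_eq ξ, sq_eq (2 * ξ), one_le ξ, one_le (2 * ξ)]

end jb

section Bracket

variable {s t x : ℝ} (hs : 1 ≤ s) (hst : s ≤ t) (hts : t ≤ 2 * s) (hsx : s ^ 2 = 1 + x ^ 2)
include hs hst hts hsx

theorem cstar_main_term_le :
    (2 * s + t) * (s * t + x ^ 2 + s ^ 2) ^ 2 / (6 * s * t) ≤ 32 / 3 * s ^ 3 := by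
  have hs₀ : 0 < s := by linarith
  have hsq : s * t + x ^ 2 + s ^ 2 ≤ 4 * s ^ 2 := by nlinarith
  rw [div_le_iff₀ (by nlinarith)]
  calc (2 * s + t) * (s * t + x ^ 2 + s ^ 2) ^ 2 ≤ (4 * s) * (4 * s ^ 2) ^ 2 :=
        mul_le_mul (by linarith) (pow_le_pow_left₀ (by nlinarith) hsq 2) (sq_nonneg _)
          (by linarith)
    _ = 64 * s ^ 4 * s := by ring
    _ ≤ 64 * s ^ 4 * t := by gcongr
    _ = 32 / 3 * s ^ 3 * (6 * s * t) := by ring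

theorem cstar_correction_term_le :
    (s * t - s ^ 2 - x ^ 2) ^ 2 / (2 * (2 * s + t) * s * t) ≤ 2 / 3 * s ^ 3 := by
  have hs₀ : 0 < s := by linarith
  have hsq : (s * t - s ^ 2 - x ^ 2) ^ 2 ≤ (2 * s ^ 2) ^ 2 :=
    sq_le_sq' (by nlinarith [sq_nonneg x]) (by nlinarith [sq_nonneg x])
  have hden : 3 ≤ t * (2 * s + t) := by nlinarith
  rw [div_le_iff₀ (by nlinarith)]
  calc (s * t - s ^ 2 - x ^ 2) ^ 2 ≤ 4 / 3 * s ^ 4 * 3 := by linarith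
    _ ≤ 4 / 3 * s ^ 4 * (t * (2 * s + t)) := by gcongr
    _ = 2 / 3 * s ^ 3 * (2 * (2 * s + t) * s * t) := by ring

theorem abs_cstar_bracket_le :
    |2 * s - (2 * s + t) * (s * t + x ^ 2 + s ^ 2) ^ 2 / (6 * s * t)
    + (s * t - s ^ 2 - x ^ 2) ^ 2 / (2 * (2 * s + t) * s * t)| ≤ 32 / 3 * s ^ 3 := by
  have hs₀ : 0 < s := by linarith
  have ht₀ : 0 < t := by linarith
  have hmain : 0 ≤ (2 * s + t) * (s * t + x ^ 2 + s ^ 2) ^ 2 / (6 * s * t) := by positivity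
  have hcorr : 0 ≤ (s * t - s ^ 2 - x ^ 2) ^ 2 / (2 * (2 * s + t) * s * t) := by positivity
  have hcube : s ≤ s ^ 3 := le_self_pow₀ hs (by norm_num)
  rw [abs_le]
  constructor <;>
    linarith [cstar_main_term_le hs hst hts hsx, cstar_correction_term_le hs hst hts hsx]

end Bracket

theorem abs_cstar_le (ξ : ℝ) : |cstar ξ| ≤ 32 / 3 * ξ ^ 2 * jb ξ ^ 3 := by
  have h := abs_cstar_bracket_le (jb.one_le ξ) (jb.le_two_mul ξ) (jb.two_mul_le ξ) (jb.sq_eq ξ)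
  rw [cstar, abs_mul, abs_of_nonneg (sq_nonneg ξ)]
  linarith [mul_le_mul_of_nonneg_left h (sq_nonneg ξ)]

theorem cstar_isBigO_sq : cstar =O[𝓝 0] fun ξ => ξ ^ 2 := by
  have hjb : (fun ξ => jb ξ ^ 3) =O[𝓝 0] fun _ => (1 : ℝ) :=
    ((jb.continuous.pow 3).tendsto 0).isBigO_one ℝ
  have hbound : cstar =O[𝓝 0] fun ξ => ξ ^ 2 * jb ξ ^ 3 :=
    isBigO_of_le' _ fun ξ => by
      simpa [Real.norm_eq_abs, abs_of_nonneg (jb.one_le ξ |>.trans' zero_le_one), mul_assoc]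
        using abs_cstar_le ξ
  simpa using hbound.trans ((isBigO_refl (fun ξ : ℝ => ξ ^ 2) _).mul hjb)

/-- Properties of `c*`: `c*(0) = 0`, `(c*)'(0) = 0`, and `|c*(ξ)| ≤ C ξ² ⟨ξ⟩³`. -/
theorem stmt_19 :
    cstar 0 = 0 ∧ deriv cstar 0 = 0 ∧
    ∃ C : ℝ, ∀ ξ : ℝ, |cstar ξ| ≤ C * ξ ^ 2 * jb ξ ^ 3 := by
  have h₀ : cstar 0 = 0 := by simp [cstar]
  exact ⟨h₀, (hasDerivAt_zero_of_isBigO_sq h₀ cstar_isBigO_sq).deriv, 32 / 3, abs_cstar_le⟩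
end
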